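/- Let μ ∈ ℝ, σ > 0, p ∈ (0,1), and constants a < b. Define R₀(μ) = (1−p)·F_{μ,σ}(a) and R₁(μ) = p·F_{μ,σ}(b), where F_{μ,σ} is the N(μ,σ²) CDF, and S₁(μ) = R₁(μ)/(R₀(μ)+R₁(μ)). If a < b, then S₁ is strictly increasing in μ. -/

import Mathlib

open Real Filter Set

/-- Standard normal probability density function. -/
noncomputable def stdPdf (t : ℝ) : ℝ := (Real.sqrt (2 * Real.pi))⁻¹ * Real.exp (-(t ^ 2) / 2)

/-- Standard normal cumulative distribution function. -/
noncomputable def stdCdf (x : ℝ) : ℝ := ∫ t in Set.Iic x, stdPdf t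
section Aux
open MeasureTheory

lemma stdPdf_pos (t : ℝ) : 0 < stdPdf t := by
  apply mul_pos (inv_pos.2 (Real.sqrt_pos.2 (by positivity))) (Real.exp_pos _)

lemma continuous_stdPdf : Continuous stdPdf := by
  unfold stdPdf; fun_prop

lemma integrable_stdPdf : Integrable stdPdf := by
  have h := integrable_exp_neg_mul_sq (b := (2:ℝ)⁻¹) (by norm_num)
  have h2 := h.const_mul (Real.sqrt (2 * Real.pi))⁻¹
  apply h2.congr
  filter_upwards with t
  unfold stdPdf
  ring_nf

lemma hasDerivAt_stdPdf (x : ℝ) : HasDerivAt stdPdf (-x * stdPdf x) x := by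
  have h1 : HasDerivAt (fun t : ℝ => -(t ^ 2) / 2) (-x) x := by
    have := ((hasDerivAt_pow 2 x).neg).div_const 2
    exact this.congr_deriv (by push_cast; ring)
  have h2 := (h1.exp).const_mul (Real.sqrt (2 * Real.pi))⁻¹
  show HasDerivAt stdPdf _ x
  unfold stdPdf
  exact h2.congr_deriv (by ring)

lemma integrable_mul_stdPdf : Integrable (fun t => -t * stdPdf t) := by
  have h := integrable_mul_exp_neg_mul_sq (b := (2:ℝ)⁻¹) (by norm_num)
  have h2 := (h.const_mul (Real.sqrt (2 * Real.pi))⁻¹).neg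
  apply h2.congr
  filter_upwards with t
  show -((Real.sqrt (2*Real.pi))⁻¹ * (t * Real.exp (-2⁻¹ * t^2))) = _
  unfold stdPdf
  ring_nf

lemma tendsto_stdPdf_atBot : Tendsto stdPdf atBot (nhds 0) := by
  have h1 : Tendsto (fun t : ℝ => -(t ^ 2) / 2) atBot atBot := by
    apply Tendsto.atBot_div_const (by norm_num)
    apply tendsto_neg_atBot_iff.2
    apply tendsto_atTop_mono' _ _ tendsto_neg_atBot_atTop
    filter_upwards [eventually_le_atBot (-1 : ℝ)] with t ht
    nlinarith
  have h2 := (Real.tendsto_exp_atBot).comp h1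
  have := h2.const_mul (Real.sqrt (2 * Real.pi))⁻¹
  unfold stdPdf
  convert this using 2 with t
  simp [Function.comp]
  simp


lemma support_meas_pos {f : ℝ → ℝ} (x : ℝ) (h : Set.Iio x ⊆ Function.support f) :
    0 < MeasureTheory.volume (Function.support f ∩ Set.Iic x) := by
  calc (0:ENNReal) < MeasureTheory.volume (Set.Iio x) := by simp [Real.volume_Iio]
    _ ≤ _ := measure_mono (fun t ht => Set.mem_inter (h ht) (Set.mem_Iic.mpr (le_of_lt (Set.mem_Iio.mp ht))))

lemma stdCdf_pos (x : ℝ) : 0 < stdCdf x := by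
  rw [stdCdf]
  rw [setIntegral_pos_iff_support_of_nonneg_ae]
  · exact support_meas_pos x (fun t _ => (stdPdf_pos t).ne')
  · filter_upwards with t using (stdPdf_pos t).le
  · exact integrable_stdPdf.integrableOn

lemma hasDerivAt_stdCdf (x : ℝ) : HasDerivAt stdCdf (stdPdf x) x := by
  have key : ∀ y : ℝ, stdCdf y = stdCdf 0 + ∫ t in (0:ℝ)..y, stdPdf t := by
    intro y
    rw [← intervalIntegral.integral_Iic_sub_Iic integrable_stdPdf.integrableOn
      integrable_stdPdf.integrableOn]
    simp [stdCdf]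
  have hd : HasDerivAt (fun y => stdCdf 0 + ∫ t in (0:ℝ)..y, stdPdf t) (stdPdf x) x := by
    apply HasDerivAt.const_add
    exact intervalIntegral.integral_hasDerivAt_right
      (integrable_stdPdf.intervalIntegrable)
      (continuous_stdPdf.stronglyMeasurable.stronglyMeasurableAtFilter)
      continuous_stdPdf.continuousAt
  exact hd.congr_of_eventuallyEq (Filter.Eventually.of_forall key) |>.congr_deriv rfl

lemma integral_neg_mul_stdPdf (x : ℝ) : ∫ t in Set.Iic x, -t * stdPdf t = stdPdf x := by
  have := integral_Iic_of_hasDerivAt_of_tendsto' (a := x) (f := stdPdf)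
    (f' := fun t => -t * stdPdf t)
    (fun t _ => hasDerivAt_stdPdf t) integrable_mul_stdPdf.integrableOn tendsto_stdPdf_atBot
  simpa using this

lemma key_ineq (x : ℝ) : 0 < x * stdCdf x + stdPdf x := by
  rcases le_or_gt 0 x with hx | hx
  · have := stdCdf_pos x
    have := stdPdf_pos x
    nlinarith
  · have hint1 : IntegrableOn (fun t => -x * stdPdf t) (Set.Iic x) :=
      (integrable_stdPdf.const_mul _).integrableOn
    have hint2 : IntegrableOn (fun t => -t * stdPdf t) (Set.Iic x) :=
      integrable_mul_stdPdf.integrableOn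
    have hdiff : 0 < ∫ t in Set.Iic x, (-t * stdPdf t - -x * stdPdf t) := by
      rw [setIntegral_pos_iff_support_of_nonneg_ae]
      · apply support_meas_pos
        intro t ht
        simp only [Function.mem_support]
        have h0 : 0 < (x - t) * stdPdf t := mul_pos (by simp at ht; linarith) (stdPdf_pos t)
        intro h; apply h0.ne'; rw [← h]; ring
      · rw [EventuallyLE, ae_restrict_iff' measurableSet_Iic]
        filter_upwards with t ht
        simp only [Pi.zero_apply, sub_nonneg]
        exact mul_le_mul_of_nonneg_right (by simpa using ht) (stdPdf_pos t).le
      · exact hint2.sub hint1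
    rw [MeasureTheory.integral_sub hint2 hint1] at hdiff
    rw [integral_neg_mul_stdPdf] at hdiff
    have h2 : ∫ t in Set.Iic x, -x * stdPdf t = -x * stdCdf x := by
      rw [stdCdf, ← integral_const_mul]
    rw [h2] at hdiff
    linarith

noncomputable def rhr (x : ℝ) : ℝ := stdPdf x / stdCdf x

lemma strictAnti_rhr : StrictAnti rhr := by
  have hd : ∀ x, HasDerivAt rhr
      ((-x * stdPdf x * stdCdf x - stdPdf x * stdPdf x) / (stdCdf x) ^ 2) x := fun x =>
    (hasDerivAt_stdPdf x).div (hasDerivAt_stdCdf x) (stdCdf_pos x).ne'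
  apply strictAnti_of_deriv_neg
  intro x
  rw [(hd x).deriv]
  apply div_neg_of_neg_of_pos
  · have := key_ineq x
    have := stdPdf_pos x
    nlinarith
  · exact pow_pos (stdCdf_pos x) 2

lemma logdiff_strictAnti (δ : ℝ) (hδ : 0 < δ) :
    StrictAnti (fun c => Real.log (stdCdf (c + δ)) - Real.log (stdCdf c)) := by
  have hd : ∀ c : ℝ, HasDerivAt (fun c => Real.log (stdCdf (c + δ)) - Real.log (stdCdf c))
      (rhr (c + δ) - rhr c) c := by
    intro c
    have h1 : HasDerivAt (fun c : ℝ => stdCdf (c + δ)) (stdPdf (c + δ)) c := by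
      have := (hasDerivAt_stdCdf (c + δ)).comp c ((hasDerivAt_id c).add_const δ)
      exact this.congr_deriv (mul_one _)
    exact (h1.log (stdCdf_pos _).ne').sub ((hasDerivAt_stdCdf c).log (stdCdf_pos c).ne')
  apply strictAnti_of_deriv_neg
  intro c
  rw [(hd c).deriv]
  have := strictAnti_rhr (lt_add_of_pos_right c hδ)
  linarith

lemma key_prod (c₁ c₂ δ : ℝ) (hc : c₁ < c₂) (hδ : 0 < δ) :
    stdCdf c₁ * stdCdf (c₂ + δ) < stdCdf c₂ * stdCdf (c₁ + δ) := by
  have h := logdiff_strictAnti δ hδ hc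
  simp only at h
  have h2 : Real.log (stdCdf (c₂ + δ)) + Real.log (stdCdf c₁) <
      Real.log (stdCdf (c₁ + δ)) + Real.log (stdCdf c₂) := by linarith
  rw [← Real.log_mul (stdCdf_pos _).ne' (stdCdf_pos _).ne',
    ← Real.log_mul (stdCdf_pos _).ne' (stdCdf_pos _).ne'] at h2
  have h3 := (Real.log_lt_log_iff (mul_pos (stdCdf_pos (c₂ + δ)) (stdCdf_pos c₁)) (mul_pos (stdCdf_pos (c₁ + δ)) (stdCdf_pos c₂))).mp h2
  nlinarith [h3]


end Aux

/-- The share of large sale risk S₁(μ) = R₁/(R₀+R₁) is strictly increasing in μ,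
where R₀(μ) = (1−p)·Φ((a−μ)/σ), R₁(μ) = p·Φ((b−μ)/σ), and a < b. -/
theorem stmt13 (σ p a b : ℝ) (hσ : 0 < σ) (hp0 : 0 < p) (hp1 : p < 1) (hab : a < b) :
    StrictMono (fun μ : ℝ =>
      p * stdCdf ((b - μ) / σ) /
        ((1 - p) * stdCdf ((a - μ) / σ) + p * stdCdf ((b - μ) / σ))) := by
  intro μ₁ μ₂ hμ
  simp only
  set A₁ := stdCdf ((a - μ₁) / σ) with hA₁
  set A₂ := stdCdf ((a - μ₂) / σ) with hA₂
  set B₁ := stdCdf ((b - μ₁) / σ) with hB₁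
  set B₂ := stdCdf ((b - μ₂) / σ) with hB₂
  have hA1p : 0 < A₁ := stdCdf_pos _
  have hA2p : 0 < A₂ := stdCdf_pos _
  have hB1p : 0 < B₁ := stdCdf_pos _
  have hB2p : 0 < B₂ := stdCdf_pos _
  have hp1' : 0 < 1 - p := by linarith
  have hD1 : 0 < (1 - p) * A₁ + p * B₁ := by positivity
  have hD2 : 0 < (1 - p) * A₂ + p * B₂ := by positivity
  rw [div_lt_div_iff₀ hD1 hD2]
  have hkey : A₂ * B₁ < A₁ * B₂ := by
    have hc : (a - μ₂) / σ < (a - μ₁) / σ := by gcongr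
    have hδ : 0 < (b - a) / σ := div_pos (by linarith) hσ
    have h := key_prod _ _ _ hc hδ
    have e1 : (a - μ₂) / σ + (b - a) / σ = (b - μ₂) / σ := by ring
    have e2 : (a - μ₁) / σ + (b - a) / σ = (b - μ₁) / σ := by ring
    rw [e1, e2] at h
    exact h
  nlinarith [mul_pos hp0 hp1', hkey]
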